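/- Every schedule in increasing irreducible structure for a MinBudget instance (N, ⊴, c) is optimal, i.e., its budget equals b(N), the minimum budget over all feasible schedules. -/

import Mathlib

open List

variable {ι : Type*} [DecidableEq ι]

/-- Total cost of a schedule (list of jobs). -/
def listCost (c : ι → ℝ) (S : List ι) : ℝ := (S.map c).sum

/-- Budget of a schedule: maximum cost of a prefix (the empty prefix has cost 0). -/
def listBudget (c : ι → ℝ) : List ι → ℝ
  | [] => 0
  | j :: t => max 0 (c j + listBudget c t)

/-- Return of a schedule. -/
def listReturn (c : ι → ℝ) (S : List ι) : ℝ := listCost c S - listBudget c S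

/-- `S` enumerates the finite job set `N` without repetition. -/
def IsScheduleOf (N : Finset ι) (S : List ι) : Prop :=
  S.Nodup ∧ ∀ j, j ∈ S ↔ j ∈ N

/-- `S` is a linear extension of the precedence relation `r` (restricted to its jobs). -/
def RespectsOrder (r : ι → ι → Prop) (S : List ι) : Prop :=
  ∀ i j, r i j → i ∈ S → j ∈ S → S.idxOf i ≤ S.idxOf j

/-- Minimum budget over all feasible schedules of the job set `X`. -/
noncomputable def setBudget (r : ι → ι → Prop) (c : ι → ℝ) (X : Finset ι) : ℝ :=
  sInf {b | ∃ S : List ι, IsScheduleOf X S ∧ RespectsOrder r S ∧ listBudget c S = b}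

/-- Total cost of a job set. -/
def setCost (c : ι → ℝ) (X : Finset ι) : ℝ := ∑ j ∈ X, c j

/-- Return of a job set. -/
noncomputable def setReturn (r : ι → ι → Prop) (c : ι → ℝ) (X : Finset ι) : ℝ :=
  setCost c X - setBudget r c X

/-- The cbr-preorder on job sets. -/
def cbrLE (r : ι → ι → Prop) (c : ι → ℝ) (X Y : Finset ι) : Prop :=
  (setCost c X < 0 ∧ 0 ≤ setCost c Y) ∨
  (setCost c X < 0 ∧ setCost c Y < 0 ∧ setBudget r c X < setBudget r c Y) ∨
  (setCost c X < 0 ∧ setCost c Y < 0 ∧ setBudget r c X = setBudget r c Y ∧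
    setReturn r c X ≤ setReturn r c Y) ∨
  (0 ≤ setCost c X ∧ 0 ≤ setCost c Y ∧ setReturn r c X ≤ setReturn r c Y)

/-- `J` is an ideal (downward-closed subset) of `r` restricted to `I`. -/
def IsIdealIn (r : ι → ι → Prop) (I J : Finset ι) : Prop :=
  J ⊆ I ∧ ∀ j ∈ J, ∀ i ∈ I, r i j → i ∈ J

/-- `F` is a filter (upward-closed subset) of `r` restricted to `I`. -/
def IsFilterIn (r : ι → ι → Prop) (I F : Finset ι) : Prop :=
  F ⊆ I ∧ ∀ i ∈ F, ∀ j ∈ I, r i j → j ∈ F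

/-- `I` is an interval of `r` on `N`: intersection of an ideal and a filter. -/
def IsIntervalIn (r : ι → ι → Prop) (N I : Finset ι) : Prop :=
  ∃ J F, IsIdealIn r N J ∧ IsFilterIn r N F ∧ I = J ∩ F

/-- An irreducible interval: every ideal of the restricted order is `⪰` the interval. -/
def IsIrreducibleIn (r : ι → ι → Prop) (c : ι → ℝ) (N I : Finset ι) : Prop :=
  IsIntervalIn r N I ∧ ∀ J, IsIdealIn r I J → cbrLE r c I J

/-- A schedule (given as blocks `SS`) in increasing irreducible structure. -/
def IncIrrStructure (r : ι → ι → Prop) (c : ι → ℝ) (N : Finset ι)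
    (SS : List (List ι)) : Prop :=
  IsScheduleOf N SS.flatten ∧ RespectsOrder r SS.flatten ∧
  (∀ S ∈ SS, IsIrreducibleIn r c N S.toFinset ∧ RespectsOrder r S ∧
    listBudget c S = setBudget r c S.toFinset) ∧
  ∀ i j : Fin SS.length, i < j → cbrLE r c (SS.get i).toFinset (SS.get j).toFinset

/-!
Fix a feasible schedule `T` of `N` and induct on the number of blocks.

If the first block `I` has negative cost, then `b(I)` is at most the budget of `T`: start from a
prefix of `T` whose trace on `I` costs at least `b(I)`. While the prefix has a negative trace on
some block `I'`, that trace is a negative ideal of `I'`, hence has budget at least `b(I') ≥ b(I)`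
(irreducibility of `I'` and `I ⪯ I'`), so a shorter prefix has a trace on `I'` costing at least
`b(I)`. Once no trace is negative, the prefix itself costs at least `b(I)`. Moreover the trace on
`I` of every prefix of `T` costs at least `c(I)`, since an ideal of `I` cheaper than `I` could be
enlarged, along an optimal schedule of `I`, into a still cheaper ideal. Together with the induction
hypothesis for the remaining blocks, this bounds the budget of `S₁ ⊕ (S₂ ⊕ … ⊕ S_k)`.

If the first block has nonnegative cost, so do all blocks, and the dual argument (suffixes, filters
and returns instead of prefixes, ideals and budgets) removes the last block.
-/

set_option linter.unusedSectionVars false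

section ListCost

variable (c : ι → ℝ)

@[simp] lemma listCost_nil : listCost c [] = 0 := rfl

@[simp] lemma listCost_cons (a : ι) (L : List ι) : listCost c (a :: L) = c a + listCost c L := by
  simp [listCost]

@[simp] lemma listCost_append (A B : List ι) :
    listCost c (A ++ B) = listCost c A + listCost c B := by
  simp [listCost]

@[simp] lemma listBudget_nil : listBudget c [] = 0 := rfl

@[simp] lemma listBudget_cons (a : ι) (L : List ι) :
    listBudget c (a :: L) = max 0 (c a + listBudget c L) := rfl

lemma listBudget_nonneg (L : List ι) : 0 ≤ listBudget c L := by
  cases L <;> simp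

lemma listBudget_append (A B : List ι) :
    listBudget c (A ++ B) = max (listBudget c A) (listCost c A + listBudget c B) := by
  induction A with
  | nil => simp [listBudget_nonneg]
  | cons a A ih =>
    simp only [cons_append, listBudget_cons, ih, listCost_cons, ← max_add_add_left, max_assoc,
      add_assoc]

lemma listCost_take_le_listBudget (L : List ι) (n : ℕ) :
    listCost c (L.take n) ≤ listBudget c L := by
  induction L generalizing n with
  | nil => simp
  | cons a L ih =>
    cases n with
    | zero => simp
    | succ n =>
      simp only [take_succ_cons, listCost_cons, listBudget_cons]
      exact le_max_of_le_right ((add_le_add_iff_left _).mpr (ih n))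

lemma exists_listBudget_eq_listCost_take (L : List ι) :
    ∃ n, listBudget c L = listCost c (L.take n) := by
  induction L with
  | nil => exact ⟨0, rfl⟩
  | cons a L ih =>
    obtain ⟨n, hn⟩ := ih
    rcases le_total (c a + listBudget c L) 0 with h | h
    · exact ⟨0, by simp [max_eq_left h]⟩
    · exact ⟨n + 1, by rw [listBudget_cons, max_eq_right h, hn]; simp⟩

lemma listReturn_le_listCost_drop (L : List ι) (n : ℕ) :
    listReturn c L ≤ listCost c (L.drop n) := by
  have h := congrArg (listCost c) (take_append_drop n L)
  rw [listCost_append] at h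
  rw [listReturn]
  linarith [listCost_take_le_listBudget c L n]

lemma exists_listReturn_eq_listCost_drop (L : List ι) :
    ∃ n, listReturn c L = listCost c (L.drop n) := by
  obtain ⟨n, hn⟩ := exists_listBudget_eq_listCost_take c L
  have h := congrArg (listCost c) (take_append_drop n L)
  rw [listCost_append] at h
  exact ⟨n, by rw [listReturn, hn]; linarith⟩

lemma listCost_eq_setCost {L : List ι} (hL : L.Nodup) : listCost c L = setCost c L.toFinset :=
  (sum_toFinset c hL).symm

lemma listCost_filter_mem {L : List ι} (hL : L.Nodup) (X : Finset ι) :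
    listCost c (L.filter (· ∈ X)) = setCost c (L.toFinset ∩ X) := by
  rw [listCost_eq_setCost c (hL.filter _), toFinset_filter]
  simp [Finset.filter_mem_eq_inter]

lemma setCost_neg (X : Finset ι) : setCost (-c) X = -setCost c X := by
  simp [setCost]

end ListCost

lemma exists_take_filter_eq_filter_take {α : Type*} (p : α → Bool) (l : List α) (n : ℕ) :
    ∃ m, (l.filter p).take n = (l.take m).filter p := by
  induction l generalizing n with
  | nil => exact ⟨0, by simp⟩
  | cons a l ih =>
    cases n with
    | zero => exact ⟨0, by simp⟩
    | succ n =>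
      by_cases ha : p a
      · obtain ⟨m, hm⟩ := ih n
        exact ⟨m + 1, by simp [ha, hm]⟩
      · obtain ⟨m, hm⟩ := ih (n + 1)
        exact ⟨m + 1, by simp [ha, hm]⟩

lemma exists_drop_filter_eq_filter_drop {α : Type*} (p : α → Bool) (l : List α) (n : ℕ) :
    ∃ m, (l.filter p).drop n = (l.drop m).filter p := by
  obtain ⟨m, hm⟩ := exists_take_filter_eq_filter_take p l n
  refine ⟨m, append_cancel_left (as := (l.filter p).take n) ?_⟩
  rw [take_append_drop, hm, ← filter_append, take_append_drop]

section Feasibility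

variable {r : ι → ι → Prop}

def IsFeasible (r : ι → ι → Prop) (X : Finset ι) (S : List ι) : Prop :=
  IsScheduleOf X S ∧ RespectsOrder r S

def IsOptimalSchedule (r : ι → ι → Prop) (c : ι → ℝ) (X : Finset ι) (S : List ι) : Prop :=
  IsFeasible r X S ∧ listBudget c S = setBudget r c X

lemma respectsOrder_iff_pairwise {S : List ι} (hS : S.Nodup) :
    RespectsOrder r S ↔ S.Pairwise fun a b => ¬ r b a := by
  constructor
  · intro h
    refine pairwise_iff_getElem.mpr fun i j hi hj hij hr => ?_
    have := h _ _ hr (getElem_mem hj) (getElem_mem hi)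
    rw [hS.idxOf_getElem, hS.idxOf_getElem] at this
    omega
  · intro h i j hij hi hj
    by_contra! hlt
    have hi' := idxOf_lt_length_iff.mpr hi
    have hj' := idxOf_lt_length_iff.mpr hj
    have := pairwise_iff_getElem.mp h _ _ hj' hi' hlt
    rw [getElem_idxOf, getElem_idxOf] at this
    exact this hij

lemma IsScheduleOf.toFinset_eq {N : Finset ι} {T : List ι} (h : IsScheduleOf N T) :
    T.toFinset = N := by
  ext j
  simp [h.2 j]

lemma IsScheduleOf.listCost_eq (c : ι → ℝ) {N : Finset ι} {T : List ι} (h : IsScheduleOf N T) :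
    listCost c T = setCost c N := by
  rw [listCost_eq_setCost c h.1, h.toFinset_eq]

lemma IsScheduleOf.toFinset_take_subset {N : Finset ι} {T : List ι} (h : IsScheduleOf N T)
    (m : ℕ) : (T.take m).toFinset ⊆ N :=
  fun j hj => (h.2 j).mp (mem_of_mem_take (mem_toFinset.mp hj))

lemma IsScheduleOf.toFinset_drop_subset {N : Finset ι} {T : List ι} (h : IsScheduleOf N T)
    (m : ℕ) : (T.drop m).toFinset ⊆ N :=
  fun j hj => (h.2 j).mp (mem_of_mem_drop (mem_toFinset.mp hj))

lemma IsScheduleOf.right_of_append {N : Finset ι} {A B : List ι} (h : IsScheduleOf N (A ++ B)) :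
    IsScheduleOf (N \ A.toFinset) B := by
  obtain ⟨-, hB, hAB⟩ := nodup_append.mp h.1
  refine ⟨hB, fun j => ?_⟩
  rw [Finset.mem_sdiff, ← h.2, mem_append, mem_toFinset]
  exact ⟨fun hj => ⟨Or.inr hj, fun hjA => hAB j hjA j hj rfl⟩, fun hj => hj.1.resolve_left hj.2⟩

lemma IsScheduleOf.left_of_append {N : Finset ι} {A B : List ι} (h : IsScheduleOf N (A ++ B)) :
    IsScheduleOf (N \ B.toFinset) A := by
  obtain ⟨hA, -, hAB⟩ := nodup_append.mp h.1
  refine ⟨hA, fun j => ?_⟩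
  rw [Finset.mem_sdiff, ← h.2, mem_append, mem_toFinset]
  exact ⟨fun hj => ⟨Or.inl hj, fun hjB => hAB j hj j hjB rfl⟩, fun hj => hj.1.resolve_right hj.2⟩

lemma IsFeasible.filter {N : Finset ι} {T : List ι} (h : IsFeasible r N T) (p : ι → Bool) :
    IsFeasible r (N.filter fun j => p j) (T.filter p) := by
  refine ⟨⟨h.1.1.filter p, fun j => by simp [h.1.2 j]⟩, ?_⟩
  exact (respectsOrder_iff_pairwise (h.1.1.filter p)).mpr
    (((respectsOrder_iff_pairwise h.1.1).mp h.2).sublist filter_sublist)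

lemma IsFeasible.filter_mem {N X : Finset ι} {T : List ι} (h : IsFeasible r N T) (hX : X ⊆ N) :
    IsFeasible r X (T.filter (· ∈ X)) := by
  simpa [Finset.filter_mem_eq_inter, Finset.inter_eq_right.mpr hX] using h.filter (· ∈ X)

lemma IsFeasible.filter_not_mem {N : Finset ι} {T : List ι} (h : IsFeasible r N T) (X : Finset ι) :
    IsFeasible r (N \ X) (T.filter (· ∉ X)) := by
  simpa [Finset.filter_notMem_eq_sdiff] using h.filter (· ∉ X)

lemma IsFeasible.append {A B : Finset ι} {U V : List ι} (hU : IsFeasible r A U)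
    (hV : IsFeasible r B V) (hAB : Disjoint A B) (hr : ∀ a ∈ A, ∀ b ∈ B, ¬ r b a) :
    IsFeasible r (A ∪ B) (U ++ V) := by
  have hnd : (U ++ V).Nodup := nodup_append.mpr ⟨hU.1.1, hV.1.1, fun a ha b hb hab =>
    Finset.disjoint_left.mp hAB ((hU.1.2 a).mp ha) (hab ▸ (hV.1.2 b).mp hb)⟩
  refine ⟨⟨hnd, fun j => by simp [hU.1.2 j, hV.1.2 j]⟩, (respectsOrder_iff_pairwise hnd).mpr ?_⟩
  exact pairwise_append.mpr ⟨(respectsOrder_iff_pairwise hU.1.1).mp hU.2,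
    (respectsOrder_iff_pairwise hV.1.1).mp hV.2,
    fun a ha b hb => hr a ((hU.1.2 a).mp ha) b ((hV.1.2 b).mp hb)⟩

variable (c : ι → ℝ)

lemma setBudget_le {X : Finset ι} {S : List ι} (h : IsFeasible r X S) :
    setBudget r c X ≤ listBudget c S :=
  csInf_le ⟨0, by rintro _ ⟨S, -, -, rfl⟩; exact listBudget_nonneg c S⟩ ⟨S, h.1, h.2, rfl⟩

lemma exists_isOptimalSchedule {X : Finset ι} {S : List ι} (h : IsFeasible r X S) :
    ∃ U, IsOptimalSchedule r c X U := by
  have hfin : {b | ∃ S, IsScheduleOf X S ∧ RespectsOrder r S ∧ listBudget c S = b}.Finite := by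
    refine ((X.toList.permutations.finite_toSet).image (listBudget c)).subset ?_
    rintro _ ⟨U, hU, -, rfl⟩
    refine ⟨U, mem_permutations.mpr ((perm_ext_iff_of_nodup hU.1 X.nodup_toList).mpr fun a => ?_),
      rfl⟩
    simp [hU.2 a]
  obtain ⟨U, hU, hUo, hUb⟩ := Set.Nonempty.csInf_mem (by exact ⟨_, S, h.1, h.2, rfl⟩) hfin
  exact ⟨U, ⟨hU, hUo⟩, hUb⟩

end Feasibility

section Restriction

variable {r : ι → ι → Prop} (c : ι → ℝ) {N X : Finset ι} {T : List ι}

lemma exists_setBudget_le_setCost_take_inter (hT : IsFeasible r N T) (hX : X ⊆ N) :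
    ∃ m, setBudget r c X ≤ setCost c ((T.take m).toFinset ∩ X) := by
  obtain ⟨n, hn⟩ := exists_listBudget_eq_listCost_take c (T.filter (· ∈ X))
  obtain ⟨m, hm⟩ := exists_take_filter_eq_filter_take _ T n
  refine ⟨m, ?_⟩
  rw [← listCost_filter_mem c ((take_sublist m T).nodup hT.1.1), ← hm, ← hn]
  exact setBudget_le c (hT.filter_mem hX)

lemma exists_setCost_drop_inter_le_setReturn (hT : IsFeasible r N T) (hX : X ⊆ N) :
    ∃ m, setCost c ((T.drop m).toFinset ∩ X) ≤ setReturn r c X := by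
  obtain ⟨n, hn⟩ := exists_listReturn_eq_listCost_drop c (T.filter (· ∈ X))
  obtain ⟨m, hm⟩ := exists_drop_filter_eq_filter_drop _ T n
  refine ⟨m, ?_⟩
  have hfeas := hT.filter_mem hX
  rw [← listCost_filter_mem c ((drop_sublist m T).nodup hT.1.1), ← hm, ← hn, listReturn, setReturn,
    hfeas.1.listCost_eq]
  linarith [setBudget_le c hfeas]

lemma add_listBudget_filter_not_le (hT : T.Nodup) {κ : ℝ}
    (hκ : ∀ m, κ ≤ setCost c ((T.take m).toFinset ∩ X)) :
    κ + listBudget c (T.filter (· ∉ X)) ≤ listBudget c T := by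
  obtain ⟨n, hn⟩ := exists_listBudget_eq_listCost_take c (T.filter (· ∉ X))
  obtain ⟨m, hm⟩ := exists_take_filter_eq_filter_take _ T n
  have hsplit : listCost c ((T.take m).filter (· ∈ X)) + listCost c ((T.take m).filter (· ∉ X)) =
      listCost c (T.take m) := sum_map_filter_add_sum_map_filter_not _ _ _
  rw [listCost_filter_mem c ((take_sublist m T).nodup hT)] at hsplit
  rw [hn, hm]
  linarith [hκ m, listCost_take_le_listBudget c T m]

lemma isIdealIn_take_inter (hT : IsFeasible r N T) {I : Finset ι} (hI : I ⊆ N) (m : ℕ) :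
    IsIdealIn r I ((T.take m).toFinset ∩ I) := by
  refine ⟨Finset.inter_subset_right, fun j hj i hi hij => ?_⟩
  rw [Finset.mem_inter, mem_toFinset] at hj ⊢
  refine ⟨?_, hi⟩
  have hpw := (respectsOrder_iff_pairwise hT.1.1).mp hT.2
  have hiT := (hT.1.2 i).mpr (hI hi)
  rw [← take_append_drop m T] at hpw hiT
  exact (mem_append.mp hiT).resolve_right fun hid => (pairwise_append.mp hpw).2.2 j hj.1 i hid hij

lemma isFilterIn_drop_inter (hT : IsFeasible r N T) {I : Finset ι} (hI : I ⊆ N) (m : ℕ) :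
    IsFilterIn r I ((T.drop m).toFinset ∩ I) := by
  refine ⟨Finset.inter_subset_right, fun i hi j hj hij => ?_⟩
  rw [Finset.mem_inter, mem_toFinset] at hi ⊢
  refine ⟨?_, hj⟩
  have hpw := (respectsOrder_iff_pairwise hT.1.1).mp hT.2
  have hjT := (hT.1.2 j).mpr (hI hj)
  rw [← take_append_drop m T] at hpw hjT
  exact (mem_append.mp hjT).resolve_left fun hjt => (pairwise_append.mp hpw).2.2 j hjt i hi.1 hij

end Restriction

section Irreducible

variable {r : ι → ι → Prop} {c : ι → ℝ} {I X Y : Finset ι}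

lemma cbrLE.setCost_neg_and_setBudget_le (h : cbrLE r c X Y) (hY : setCost c Y < 0) :
    setCost c X < 0 ∧ setBudget r c X ≤ setBudget r c Y := by
  rcases h with ⟨-, h⟩ | ⟨hX, -, h⟩ | ⟨hX, -, h, -⟩ | ⟨-, h, -⟩
  · exact absurd hY (not_lt.mpr h)
  · exact ⟨hX, h.le⟩
  · exact ⟨hX, h.le⟩
  · exact absurd hY (not_lt.mpr h)

lemma cbrLE.setCost_nonneg_and_setReturn_le (h : cbrLE r c X Y) (hX : 0 ≤ setCost c X) :
    0 ≤ setCost c Y ∧ setReturn r c X ≤ setReturn r c Y := by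
  rcases h with ⟨h, -⟩ | ⟨h, -⟩ | ⟨h, -⟩ | ⟨-, hY, h⟩
  iterate 3 exact absurd h (not_lt.mpr hX)
  exact ⟨hY, h⟩

lemma IsIdealIn.union {A B : Finset ι} (hA : IsIdealIn r I A) (hB : IsIdealIn r I B) :
    IsIdealIn r I (A ∪ B) := by
  refine ⟨Finset.union_subset hA.1 hB.1, fun j hj i hi hij => ?_⟩
  rcases Finset.mem_union.mp hj with hj | hj
  · exact Finset.mem_union_left _ (hA.2 j hj i hi hij)
  · exact Finset.mem_union_right _ (hB.2 j hj i hi hij)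

lemma IsFilterIn.isIdealIn_sdiff {F : Finset ι} (hF : IsFilterIn r I F) :
    IsIdealIn r I (I \ F) := by
  refine ⟨Finset.sdiff_subset, fun j hj i hi hij => ?_⟩
  rw [Finset.mem_sdiff] at hj ⊢
  exact ⟨hi, fun hiF => hj.2 (hF.2 i hiF j hj.1 hij)⟩

variable (c) in
lemma setBudget_le_max_of_isFilterIn {S : List ι} (hS : IsFeasible r I S) {F : Finset ι}
    (hF : IsFilterIn r I F) :
    setBudget r c I ≤ max (setBudget r c (I \ F)) (setCost c (I \ F) + setBudget r c F) := by
  obtain ⟨U, hU, hUb⟩ := exists_isOptimalSchedule c (hS.filter_mem (Finset.sdiff_subset (t := F)))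
  obtain ⟨V, hV, hVb⟩ := exists_isOptimalSchedule c (hS.filter_mem hF.1)
  have hUV := hU.append hV Finset.sdiff_disjoint fun a ha b hb hba =>
    (Finset.mem_sdiff.mp ha).2 (hF.2 b hb a (Finset.mem_sdiff.mp ha).1 hba)
  rw [Finset.sdiff_union_of_subset hF.1] at hUV
  calc setBudget r c I ≤ listBudget c (U ++ V) := setBudget_le c hUV
    _ = _ := by rw [listBudget_append, hUb, hVb, hU.1.listCost_eq]

def IsCbrIrreducible (r : ι → ι → Prop) (c : ι → ℝ) (I : Finset ι) : Prop :=
  ∀ J, IsIdealIn r I J → cbrLE r c I J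

lemma IsCbrIrreducible.setCost_nonneg (hI : IsCbrIrreducible r c I) (hc : 0 ≤ setCost c I)
    {Q : Finset ι} (hQ : IsIdealIn r I Q) : 0 ≤ setCost c Q :=
  ((hI Q hQ).setCost_nonneg_and_setReturn_le hc).1

lemma IsCbrIrreducible.setCost_le (hI : IsCbrIrreducible r c I) {S : List ι}
    (hS : IsOptimalSchedule r c I S) (hc : setCost c I < 0) {Q : Finset ι} (hQ : IsIdealIn r I Q) :
    setCost c I ≤ setCost c Q := by
  classical
  obtain ⟨A, hA, hmin⟩ := (I.powerset.filter (IsIdealIn r I)).exists_min_image (setCost c)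
    ⟨∅, by simp [IsIdealIn]⟩
  have hideal {B : Finset ι} (hB : IsIdealIn r I B) : B ∈ I.powerset.filter (IsIdealIn r I) :=
    Finset.mem_filter.mpr ⟨Finset.mem_powerset.mpr hB.1, hB⟩
  replace hA := (Finset.mem_filter.mp hA).2
  refine le_trans ?_ (hmin Q (hideal hQ))
  by_contra! hlt
  have hbud : setBudget r c I < setBudget r c A := by
    rcases hI A hA with ⟨-, h⟩ | ⟨-, -, h⟩ | ⟨-, -, h, hret⟩ | ⟨-, h, -⟩
    · linarith
    · exact h
    · unfold setReturn at hret; linarith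
    · linarith
  -- A prefix of `S` on which the restriction of `S` to `A` attains its budget enlarges `A` to a
  -- cheaper ideal.
  obtain ⟨m, hm⟩ := exists_setBudget_le_setCost_take_inter c hS.1 hA.1
  have hP : IsIdealIn r I (S.take m).toFinset := by
    simpa [Finset.inter_eq_left.mpr (hS.1.1.toFinset_take_subset m)] using
      isIdealIn_take_inter hS.1 subset_rfl m
  have hPcost : setCost c (S.take m).toFinset ≤ setBudget r c I := by
    rw [← listCost_eq_setCost c ((take_sublist m S).nodup hS.1.1.1), ← hS.2]
    exact listCost_take_le_listBudget c S m
  have hunion : setCost c (A ∪ (S.take m).toFinset) + setCost c ((S.take m).toFinset ∩ A) =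
      setCost c A + setCost c (S.take m).toFinset := by
    rw [Finset.inter_comm]
    exact Finset.sum_union_inter
  linarith [hmin _ (hideal (hA.union hP))]

lemma IsCbrIrreducible.setReturn_le (hI : IsCbrIrreducible r c I) {S : List ι}
    (hS : IsFeasible r I S) (hc : 0 ≤ setCost c I) {F : Finset ι} (hF : IsFilterIn r I F)
    (hcF : 0 < setCost c F) :
    setReturn r c F ≤ setReturn r c I := by
  have hret := ((hI _ hF.isIdealIn_sdiff).setCost_nonneg_and_setReturn_le hc).2
  have hcost : setCost c (I \ F) + setCost c F = setCost c I := Finset.sum_sdiff hF.1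
  unfold setReturn at hret ⊢
  rcases le_max_iff.mp (setBudget_le_max_of_isFilterIn c hS hF) with h | h <;> linarith

end Irreducible

section Descent

variable (c : ι → ℝ) {bs : Finset (Finset ι)}

lemma setCost_eq_sum_inter (hbs : (bs : Set (Finset ι)).PairwiseDisjoint id) {P : Finset ι}
    (hP : P ⊆ bs.sup id) : setCost c P = ∑ I ∈ bs, setCost c (P ∩ I) := by
  have hP' : P = bs.biUnion (P ∩ ·) := by
    ext j
    simp only [Finset.mem_biUnion, Finset.mem_inter]
    refine ⟨fun hj => ?_, fun ⟨_, _, hj, _⟩ => hj⟩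
    obtain ⟨I, hI, hjI⟩ := Finset.mem_sup.mp (hP hj)
    exact ⟨I, hI, hj, hjI⟩
  conv_lhs => rw [hP']
  exact Finset.sum_biUnion fun I hI J hJ hIJ =>
    (hbs hI hJ hIJ).mono Finset.inter_subset_right Finset.inter_subset_right

/-- In the applications the cuts are the prefix sets of a schedule, or its suffix sets with the
costs `-c`. -/
lemma exists_cut_le_setCost {cut : Finset ι → Prop} (hinter : ∀ P Q, cut P → cut Q → cut (P ∩ Q))
    (hempty : cut ∅) (hbs : (bs : Set (Finset ι)).PairwiseDisjoint id)
    (hcover : ∀ P, cut P → P ⊆ bs.sup id) {θ : ℝ}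
    (hneg : ∀ P, cut P → ∀ I ∈ bs, setCost c (P ∩ I) < 0 →
      ∃ P', cut P' ∧ θ ≤ setCost c (P' ∩ (P ∩ I)))
    {P I : Finset ι} (hP : cut P) (hI : I ∈ bs) (hθ : θ ≤ setCost c (P ∩ I)) :
    ∃ P, cut P ∧ θ ≤ setCost c P := by
  rcases le_or_gt θ 0 with hθ0 | hθ0
  · exact ⟨∅, hempty, by simpa [setCost] using hθ0⟩
  induction P using Finset.strongInductionOn generalizing I with
  | _ P ih =>
  by_cases hnonneg : ∀ J ∈ bs, 0 ≤ setCost c (P ∩ J)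
  · refine ⟨P, hP, hθ.trans ?_⟩
    rw [setCost_eq_sum_inter c hbs (hcover P hP)]
    exact Finset.single_le_sum hnonneg hI
  push Not at hnonneg
  obtain ⟨J, hJ, hJneg⟩ := hnonneg
  obtain ⟨P', hP', hθ'⟩ := hneg P hP J hJ hJneg
  rw [← Finset.inter_assoc] at hθ'
  have hlt : P' ∩ P ⊂ P := by
    refine Finset.inter_subset_right.ssubset_of_ne fun heq => ?_
    rw [heq] at hθ'
    linarith
  exact ih _ hlt (hinter _ _ hP' hP) hJ hθ'

end Descent

section Cuts

variable {r : ι → ι → Prop} (c : ι → ℝ) {N : Finset ι} {T : List ι} {bs : Finset (Finset ι)}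

lemma toFinset_take_inter_toFinset_take (T : List ι) (a b : ℕ) :
    (T.take a).toFinset ∩ (T.take b).toFinset = (T.take (min a b)).toFinset := by
  rcases le_total a b with h | h
  · rw [min_eq_left h, Finset.inter_eq_left]
    exact fun j hj => mem_toFinset.mpr (take_subset_take_left T h (mem_toFinset.mp hj))
  · rw [min_eq_right h, Finset.inter_eq_right]
    exact fun j hj => mem_toFinset.mpr (take_subset_take_left T h (mem_toFinset.mp hj))

lemma toFinset_drop_inter_toFinset_drop (T : List ι) (a b : ℕ) :
    (T.drop a).toFinset ∩ (T.drop b).toFinset = (T.drop (max a b)).toFinset := by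
  rcases le_total a b with h | h
  · rw [max_eq_right h, Finset.inter_eq_right]
    exact fun j hj => mem_toFinset.mpr (drop_subset_drop_left T h (mem_toFinset.mp hj))
  · rw [max_eq_left h, Finset.inter_eq_left]
    exact fun j hj => mem_toFinset.mpr (drop_subset_drop_left T h (mem_toFinset.mp hj))

lemma le_listBudget_of_forall_isIdealIn (hT : IsFeasible r N T)
    (hbs : (bs : Set (Finset ι)).PairwiseDisjoint id) (hN : bs.sup id = N) {θ : ℝ}
    (hθ : ∀ I ∈ bs, ∀ Q, IsIdealIn r I Q → setCost c Q < 0 → θ ≤ setBudget r c Q)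
    {I : Finset ι} (hI : I ∈ bs) (hθI : θ ≤ setBudget r c I) : θ ≤ listBudget c T := by
  have hsub : ∀ I ∈ bs, I ⊆ N := fun I hI => hN ▸ Finset.le_sup (f := id) hI
  obtain ⟨m, hm⟩ := exists_setBudget_le_setCost_take_inter c hT (hsub I hI)
  have key := exists_cut_le_setCost c
    (cut := fun P => ∃ m, P = (T.take m).toFinset) ?inter ⟨0, by simp⟩ hbs ?cover ?neg
    ⟨m, rfl⟩ hI (hθI.trans hm)
  · obtain ⟨_, ⟨m, rfl⟩, hP⟩ := key
    rw [← listCost_eq_setCost c ((take_sublist m T).nodup hT.1.1)] at hP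
    exact hP.trans (listCost_take_le_listBudget c T m)
  case inter =>
    rintro _ _ ⟨a, rfl⟩ ⟨b, rfl⟩
    exact ⟨min a b, toFinset_take_inter_toFinset_take T a b⟩
  case cover =>
    rintro _ ⟨m, rfl⟩
    exact hN ▸ hT.1.toFinset_take_subset m
  case neg =>
    rintro _ ⟨m, rfl⟩ I hI hneg
    obtain ⟨m', hm'⟩ :=
      exists_setBudget_le_setCost_take_inter c hT (Finset.inter_subset_right.trans (hsub I hI))
    exact ⟨_, ⟨m', rfl⟩, (hθ I hI _ (isIdealIn_take_inter hT (hsub I hI) m) hneg).trans hm'⟩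

lemma listReturn_le_of_forall_isFilterIn (hT : IsFeasible r N T)
    (hbs : (bs : Set (Finset ι)).PairwiseDisjoint id) (hN : bs.sup id = N) {θ : ℝ}
    (hθ : ∀ I ∈ bs, ∀ F, IsFilterIn r I F → 0 < setCost c F → setReturn r c F ≤ θ)
    {I : Finset ι} (hI : I ∈ bs) (hθI : setReturn r c I ≤ θ) : listReturn c T ≤ θ := by
  have hsub : ∀ I ∈ bs, I ⊆ N := fun I hI => hN ▸ Finset.le_sup (f := id) hI
  obtain ⟨m, hm⟩ := exists_setCost_drop_inter_le_setReturn c hT (hsub I hI)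
  have key := exists_cut_le_setCost (-c) (θ := -θ)
    (cut := fun P => ∃ m, P = (T.drop m).toFinset) ?inter ⟨T.length, by simp⟩ hbs ?cover ?neg
    ⟨m, rfl⟩ hI (by rw [setCost_neg]; linarith)
  · obtain ⟨_, ⟨m, rfl⟩, hP⟩ := key
    rw [setCost_neg, ← listCost_eq_setCost c ((drop_sublist m T).nodup hT.1.1)] at hP
    linarith [listReturn_le_listCost_drop c T m]
  case inter =>
    rintro _ _ ⟨a, rfl⟩ ⟨b, rfl⟩
    exact ⟨max a b, toFinset_drop_inter_toFinset_drop T a b⟩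
  case cover =>
    rintro _ ⟨m, rfl⟩
    exact hN ▸ hT.1.toFinset_drop_subset m
  case neg =>
    rintro _ ⟨m, rfl⟩ I hI hpos
    rw [setCost_neg, neg_lt_zero] at hpos
    obtain ⟨m', hm'⟩ :=
      exists_setCost_drop_inter_le_setReturn c hT (Finset.inter_subset_right.trans (hsub I hI))
    refine ⟨_, ⟨m', rfl⟩, ?_⟩
    rw [setCost_neg, neg_le_neg_iff]
    exact hm'.trans (hθ I hI _ (isFilterIn_drop_inter hT (hsub I hI) m) hpos)

end Cuts

lemma pairwiseDisjoint_toFinset_of_nodup_flatten {SS : List (List ι)} (h : SS.flatten.Nodup) :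
    ((SS.map toFinset).toFinset : Set (Finset ι)).PairwiseDisjoint id := by
  have hpw : (SS.map toFinset).Pairwise _root_.Disjoint := pairwise_map.mpr
    ((nodup_flatten.mp h).2.imp fun hAB => disjoint_toFinset_iff_disjoint.mpr hAB)
  intro I hI J hJ hIJ
  exact hpw.forall (mem_toFinset.mp hI) (mem_toFinset.mp hJ) hIJ

lemma sup_toFinset_map_toFinset (SS : List (List ι)) :
    (SS.map toFinset).toFinset.sup id = SS.flatten.toFinset := by
  ext j
  simp [Finset.mem_sup]

structure IncIrrBlocks (r : ι → ι → Prop) (c : ι → ℝ) (N : Finset ι) (SS : List (List ι)) :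
    Prop where
  isScheduleOf : IsScheduleOf N SS.flatten
  isCbrIrreducible : ∀ S ∈ SS, IsCbrIrreducible r c S.toFinset
  isOptimalSchedule : ∀ S ∈ SS, IsOptimalSchedule r c S.toFinset S
  sorted : SS.Pairwise fun A B => cbrLE r c A.toFinset B.toFinset

namespace IncIrrBlocks

variable {r : ι → ι → Prop} {c : ι → ℝ} {N : Finset ι} {SS : List (List ι)} {S : List ι}
  {T : List ι}

lemma of_incIrrStructure (h : IncIrrStructure r c N SS) : IncIrrBlocks r c N SS where
  isScheduleOf := h.1
  isCbrIrreducible S hS := (h.2.2.1 S hS).1.2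
  isOptimalSchedule S hS :=
    ⟨⟨⟨(nodup_flatten.mp h.1.1).1 S hS, fun _ => mem_toFinset.symm⟩, (h.2.2.1 S hS).2.1⟩,
      (h.2.2.1 S hS).2.2⟩
  sorted := pairwise_iff_get.mpr h.2.2.2

lemma pairwiseDisjoint (h : IncIrrBlocks r c N SS) :
    ((SS.map toFinset).toFinset : Set (Finset ι)).PairwiseDisjoint id :=
  pairwiseDisjoint_toFinset_of_nodup_flatten h.isScheduleOf.1

lemma sup_eq (h : IncIrrBlocks r c N SS) : (SS.map toFinset).toFinset.sup id = N := by
  rw [sup_toFinset_map_toFinset, h.isScheduleOf.toFinset_eq]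

lemma toFinset_subset (h : IncIrrBlocks r c N SS) (hS : S ∈ SS) : S.toFinset ⊆ N :=
  h.sup_eq ▸ Finset.le_sup (f := id) (mem_toFinset.mpr (mem_map_of_mem hS))

lemma tail (h : IncIrrBlocks r c N (S :: SS)) : IncIrrBlocks r c (N \ S.toFinset) SS where
  isScheduleOf := IsScheduleOf.right_of_append (by simpa using h.isScheduleOf)
  isCbrIrreducible S' hS' := h.isCbrIrreducible S' (mem_cons_of_mem S hS')
  isOptimalSchedule S' hS' := h.isOptimalSchedule S' (mem_cons_of_mem S hS')
  sorted := h.sorted.of_cons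

lemma dropLast (h : IncIrrBlocks r c N (SS ++ [S])) : IncIrrBlocks r c (N \ S.toFinset) SS where
  isScheduleOf := IsScheduleOf.left_of_append (by simpa using h.isScheduleOf)
  isCbrIrreducible S' hS' := h.isCbrIrreducible S' (mem_append_left _ hS')
  isOptimalSchedule S' hS' := h.isOptimalSchedule S' (mem_append_left _ hS')
  sorted := h.sorted.sublist (sublist_append_left SS [S])

lemma setBudget_head_le (h : IncIrrBlocks r c N (S :: SS)) (hneg : setCost c S.toFinset < 0)
    (hT : IsFeasible r N T) : setBudget r c S.toFinset ≤ listBudget c T := by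
  refine le_listBudget_of_forall_isIdealIn c hT h.pairwiseDisjoint h.sup_eq ?_
    (mem_toFinset.mpr (mem_map_of_mem mem_cons_self)) le_rfl
  intro I hI Q hQ hQneg
  obtain ⟨S', hS', rfl⟩ := mem_map.mp (mem_toFinset.mp hI)
  obtain ⟨hS'neg, hS'Q⟩ := (h.isCbrIrreducible S' hS' Q hQ).setCost_neg_and_setBudget_le hQneg
  rcases mem_cons.mp hS' with rfl | hS'
  · exact hS'Q
  · exact (((pairwise_cons.mp h.sorted).1 S' hS').setCost_neg_and_setBudget_le hS'neg).2.trans hS'Q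

lemma listReturn_le_last (h : IncIrrBlocks r c N (SS ++ [S]))
    (hnonneg : ∀ S' ∈ SS ++ [S], 0 ≤ setCost c S'.toFinset) (hT : IsFeasible r N T) :
    listReturn c T ≤ setReturn r c S.toFinset := by
  refine listReturn_le_of_forall_isFilterIn c hT h.pairwiseDisjoint h.sup_eq ?_
    (mem_toFinset.mpr (mem_map_of_mem (mem_append_right _ (mem_singleton_self S)))) le_rfl
  intro I hI F hF hcF
  obtain ⟨S', hS', rfl⟩ := mem_map.mp (mem_toFinset.mp hI)
  refine ((h.isCbrIrreducible S' hS').setReturn_le (h.isOptimalSchedule S' hS').1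
    (hnonneg S' hS') hF hcF).trans ?_
  rcases mem_append.mp hS' with hS'' | hS''
  · have hcbr := (pairwise_append.mp h.sorted).2.2 S' hS'' S (mem_singleton_self S)
    exact (hcbr.setCost_nonneg_and_setReturn_le (hnonneg S' hS')).2
  · rw [mem_singleton.mp hS'']

lemma listBudget_cons_le (h : IncIrrBlocks r c N (S :: SS)) (hneg : setCost c S.toFinset < 0)
    (hT : IsFeasible r N T)
    (ih : listBudget c SS.flatten ≤ listBudget c (T.filter (· ∉ S.toFinset))) :
    listBudget c (S :: SS).flatten ≤ listBudget c T := by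
  have hS := h.isOptimalSchedule S mem_cons_self
  rw [flatten_cons, listBudget_append, hS.2, hS.1.1.listCost_eq]
  refine max_le (h.setBudget_head_le hneg hT) (((add_le_add_iff_left _).mpr ih).trans ?_)
  exact add_listBudget_filter_not_le c hT.1.1 fun m =>
    (h.isCbrIrreducible S mem_cons_self).setCost_le hS hneg
      (isIdealIn_take_inter hT (h.toFinset_subset mem_cons_self) m)

lemma listBudget_append_singleton_le (h : IncIrrBlocks r c N (SS ++ [S]))
    (hnonneg : ∀ S' ∈ SS ++ [S], 0 ≤ setCost c S'.toFinset) (hT : IsFeasible r N T)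
    (ih : listBudget c SS.flatten ≤ listBudget c (T.filter (· ∉ S.toFinset))) :
    listBudget c (SS ++ [S]).flatten ≤ listBudget c T := by
  have hSmem : S ∈ SS ++ [S] := mem_append_right _ (mem_singleton_self S)
  have hS := h.isOptimalSchedule S hSmem
  have hcost : listCost c SS.flatten + setCost c S.toFinset = listCost c T := by
    rw [← hS.1.1.listCost_eq, ← listCost_append, hT.1.listCost_eq, ← h.isScheduleOf.listCost_eq]
    simp
  have hret := h.listReturn_le_last hnonneg hT
  rw [flatten_append, flatten_singleton, listBudget_append, hS.2]
  refine max_le (ih.trans ?_) ?_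
  · simpa using add_listBudget_filter_not_le c hT.1.1 (κ := 0) fun m =>
      (h.isCbrIrreducible S hSmem).setCost_nonneg (hnonneg S hSmem)
        (isIdealIn_take_inter hT (h.toFinset_subset hSmem) m)
  · unfold listReturn setReturn at hret
    linarith

theorem listBudget_flatten_le (h : IncIrrBlocks r c N SS) (hT : IsFeasible r N T) :
    listBudget c SS.flatten ≤ listBudget c T := by
  obtain ⟨n, hn⟩ : ∃ n, SS.length = n := ⟨_, rfl⟩
  induction n using Nat.strong_induction_on generalizing N SS T with
  | _ n ih =>
  rcases SS with _ | ⟨S, SS⟩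
  · simpa using listBudget_nonneg c T
  by_cases hneg : setCost c S.toFinset < 0
  · exact h.listBudget_cons_le hneg hT
      (ih _ (by simp [← hn]) h.tail (hT.filter_not_mem _) rfl)
  have hnonneg : ∀ S' ∈ S :: SS, 0 ≤ setCost c S'.toFinset := by
    intro S' hS'
    rcases mem_cons.mp hS' with rfl | hS'
    · exact not_lt.mp hneg
    · exact (((pairwise_cons.mp h.sorted).1 S' hS').setCost_nonneg_and_setReturn_le
        (not_lt.mp hneg)).1
  obtain ⟨SS', S', hsplit⟩ : ∃ SS' S', S :: SS = SS' ++ [S'] :=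
    ⟨_, _, (dropLast_append_getLast (cons_ne_nil S SS)).symm⟩
  rw [hsplit] at h hnonneg hn ⊢
  exact h.listBudget_append_singleton_le hnonneg hT
    (ih _ (by simp [← hn]) h.dropLast (hT.filter_not_mem _) rfl)

end IncIrrBlocks

theorem incIrr_optimal_general (r : ι → ι → Prop)
    (c : ι → ℝ) (N : Finset ι) (SS : List (List ι))
    (h : IncIrrStructure r c N SS) :
    listBudget c SS.flatten = setBudget r c N := by
  refine le_antisymm (le_csInf ⟨_, _, h.1, h.2.1, rfl⟩ ?_) (setBudget_le c ⟨h.1, h.2.1⟩)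
  rintro _ ⟨T, hT, hTo, rfl⟩
  exact (IncIrrBlocks.of_incIrrStructure h).listBudget_flatten_le ⟨hT, hTo⟩

theorem incIrr_optimal (r : ι → ι → Prop) (hr : IsPartialOrder ι r)
    (c : ι → ℝ) (N : Finset ι) (SS : List (List ι))
    (h : IncIrrStructure r c N SS) :
    listBudget c SS.flatten = setBudget r c N :=
  incIrr_optimal_general r c N SS h
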